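/- For any Schwartz function φ on ℝ, any m ∈ ℕ, positive reals c_1,…,c_m, the identity (1/2π)⟨1/∏_{j=1}^m sin(c_j(t+i0)), φ̂(t)⟩ = (-2i)^m Σ_{k ∈ ℤ_+^m} φ(Σ_{j=1}^m (2k_j+1) c_j) holds, where φ̂ is the Fourier transform of φ. -/

import Mathlib

open MeasureTheory Filter Topology Real

/-- The Fourier transform `φ̂(k) = ∫ φ(λ) e^{-ikλ} dλ`. -/
noncomputable def fourierT (φ : SchwartzMap ℝ ℂ) (k : ℝ) : ℂ :=
  ∫ l : ℝ, φ l * Complex.exp (-(Complex.I * k * l))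

/-!
For `Im z > 0` one has `1 / sin z = -2i ∑ₙ e^{i(2n+1)z}`, absolutely convergent. Multiplying these
expansions for `z = c_j (t + iε)` gives `1 / ∏ⱼ sin(c_j (t + iε)) = (-2i)^m ∑ₖ e^{i aₖ (t + iε)}`
with `aₖ = ∑ⱼ (2kⱼ + 1) cⱼ`. Integrating termwise against `φ̂` and using Fourier inversion,
`∫ φ̂(t) e^{iat} dt = 2π φ(a)`, the regularized pairing equals `2π (-2i)^m ∑ₖ e^{-aₖ ε} φ(aₖ)`.
Since `φ` decays faster than `aₖ^{-2m} ≤ ∏ⱼ ((2kⱼ + 1) cⱼ)^{-2}`, the series `∑ₖ φ(aₖ)` converges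
absolutely and dominated convergence lets `ε → 0⁺`.
-/

open FourierTransform

section PiProduct

variable {ι R : Type*} [NormedCommRing R]

lemma prod_consEquiv_apply {m : ℕ} (f : Fin (m + 1) → ι → R) (p : ι × (Fin m → ι)) :
    ∏ j, f j ((Fin.consEquiv fun _ => ι) p j) = f 0 p.1 * ∏ j : Fin m, f j.succ (p.2 j) := by
  simp [Fin.consEquiv, Fin.prod_univ_succ]

theorem summable_norm_prod_pi {m : ℕ} {f : Fin m → ι → R}
    (hf : ∀ j, Summable fun n => ‖f j n‖) :
    Summable fun k : Fin m → ι => ‖∏ j, f j (k j)‖ := by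
  induction m with
  | zero => exact Summable.of_finite
  | succ m ih =>
    rw [← (Fin.consEquiv fun _ => ι).summable_iff]
    simp only [Function.comp_def, prod_consEquiv_apply]
    -- the ascription `(_ :)` avoids a costly higher-order unification against `∏ j, _`
    exact ((hf 0).mul_norm (ih fun j => hf j.succ) :)

theorem hasSum_prod_pi [CompleteSpace R] {m : ℕ} {f : Fin m → ι → R}
    (hf : ∀ j, Summable fun n => ‖f j n‖) :
    HasSum (fun k : Fin m → ι => ∏ j, f j (k j)) (∏ j, ∑' n, f j n) := by
  refine (summable_norm_prod_pi hf).of_norm.hasSum_iff.mpr ?_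
  induction m with
  | zero => simp
  | succ m ih =>
    rw [← (Fin.consEquiv fun _ => ι).tsum_eq, Fin.prod_univ_succ, ← ih fun j => hf j.succ]
    simp only [prod_consEquiv_apply]
    exact (tsum_mul_tsum_of_summable_norm (hf 0) (summable_norm_prod_pi fun j => hf j.succ) :).symm

end PiProduct

lemma norm_exp_I_mul (x : ℝ) (z : ℂ) :
    ‖Complex.exp (Complex.I * x * z)‖ = Real.exp (-(x * z.im)) := by
  simp [Complex.norm_exp, Complex.mul_re, Complex.mul_im]

lemma exp_I_mul_odd (n : ℕ) (z : ℂ) :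
    Complex.exp (Complex.I * (2 * n + 1) * z)
      = Complex.exp (Complex.I * z) * Complex.exp (2 * Complex.I * z) ^ n := by
  rw [← Complex.exp_nat_mul, ← Complex.exp_add]
  ring_nf

lemma norm_exp_two_I_mul_lt_one {z : ℂ} (hz : 0 < z.im) :
    ‖Complex.exp (2 * Complex.I * z)‖ < 1 := by
  rw [mul_comm 2, ← Complex.ofReal_ofNat, norm_exp_I_mul, Real.exp_lt_one_iff]
  linarith

lemma summable_norm_exp_I_mul_odd {z : ℂ} (hz : 0 < z.im) :
    Summable fun n : ℕ => ‖Complex.exp (Complex.I * (2 * n + 1) * z)‖ := by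
  simp only [exp_I_mul_odd, norm_mul]
  exact (summable_norm_geometric_of_norm_lt_one (norm_exp_two_I_mul_lt_one hz)).mul_left _

/-- `1 / sin z = -2i e^{iz} / (1 - e^{2iz})`, a geometric series in `e^{2iz}`. -/
lemma hasSum_inv_sin {z : ℂ} (hz : 0 < z.im) :
    HasSum (fun n : ℕ => -2 * Complex.I * Complex.exp (Complex.I * (2 * n + 1) * z))
      (Complex.sin z)⁻¹ := by
  have hq := norm_exp_two_I_mul_lt_one hz
  have hq1 : 1 - Complex.exp (2 * Complex.I * z) ≠ 0 := fun h => by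
    rw [← sub_eq_zero.mp h, norm_one] at hq
    exact lt_irrefl _ hq
  have hsin : Complex.sin z
      = Complex.I / 2 * Complex.exp (-(Complex.I * z)) * (1 - Complex.exp (2 * Complex.I * z)) := by
    have hzI : Complex.exp (z * Complex.I)
        = Complex.exp (-(Complex.I * z)) * Complex.exp (2 * Complex.I * z) := by
      rw [← Complex.exp_add]; ring_nf
    rw [Complex.sin, hzI, neg_mul, mul_comm z]
    ring
  have h := (hasSum_geometric_of_norm_lt_one hq).mul_left
    (-2 * Complex.I * Complex.exp (Complex.I * z))
  have hval : -2 * Complex.I * Complex.exp (Complex.I * z)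
      * (1 - Complex.exp (2 * Complex.I * z))⁻¹ = (Complex.sin z)⁻¹ := by
    rw [hsin, Complex.exp_neg]
    field_simp
    ring_nf
    simp [Complex.I_sq]
  rw [hval] at h
  simp only [exp_I_mul_odd]
  simpa only [mul_assoc] using h

lemma fourierT_eq (φ : SchwartzMap ℝ ℂ) (t : ℝ) : fourierT φ t = 𝓕 φ ((2 * π)⁻¹ * t) := by
  rw [fourierT, SchwartzMap.fourier_coe, Real.fourier_eq']
  refine integral_congr_ae (ae_of_all _ fun l => ?_)
  simp only [RCLike.inner_apply, conj_trivial, smul_eq_mul]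
  rw [mul_comm]
  congr 2
  push_cast
  field_simp

lemma integrable_fourierT (φ : SchwartzMap ℝ ℂ) : Integrable (fourierT φ) := by
  rw [funext (fourierT_eq φ)]
  exact (integrable_comp_mul_left_iff _ (by positivity)).mpr (𝓕 φ).integrable

lemma integral_fourierT_mul_exp (φ : SchwartzMap ℝ ℂ) (a : ℝ) :
    ∫ t, fourierT φ t * Complex.exp (Complex.I * a * t) = 2 * π * φ a := by
  set g : ℝ → ℂ := fun u => Complex.exp (↑(2 * π * (a * u)) * Complex.I) • 𝓕 φ u
  have hg : ∫ u, g u = φ a := by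
    have h : 𝓕⁻ (𝓕 φ) a = φ a := by rw [fourierInv_fourier_eq]
    rw [SchwartzMap.fourierInv_coe, Real.fourierInv_eq'] at h
    simpa only [RCLike.inner_apply, conj_trivial] using h
  calc ∫ t, fourierT φ t * Complex.exp (Complex.I * a * t) = ∫ t, g ((2 * π)⁻¹ * t) := by
        refine integral_congr_ae (ae_of_all _ fun t => ?_)
        simp only [g, fourierT_eq, smul_eq_mul]
        rw [mul_comm]
        congr 2
        push_cast
        field_simp
    _ = 2 * π * φ a := by
        rw [Measure.integral_comp_mul_left, hg, inv_inv, abs_of_pos (by positivity),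
          Complex.real_smul]
        push_cast; ring

lemma exp_I_mul_ofReal_add_I_mul (a t ε : ℝ) :
    Complex.exp (Complex.I * a * (t + Complex.I * ε))
      = Real.exp (-(a * ε)) * Complex.exp (Complex.I * a * t) := by
  rw [Complex.ofReal_exp, ← Complex.exp_add]
  congr 1
  push_cast
  linear_combination (a * ε : ℂ) * Complex.I_sq

lemma integrable_fourierT_mul_exp (φ : SchwartzMap ℝ ℂ) (a : ℝ) :
    Integrable fun t : ℝ => fourierT φ t * Complex.exp (Complex.I * a * t) :=
  (integrable_fourierT φ).mul_bdd (by fun_prop) (c := 1)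
    (ae_of_all _ fun t => by simp [norm_exp_I_mul])

lemma tendsto_tsum_exp_neg_mul_smul {ι E : Type*} [NormedAddCommGroup E] [NormedSpace ℝ E]
    [CompleteSpace E] {a : ι → ℝ} (ha : ∀ i, 0 ≤ a i) {b : ι → E}
    (hb : Summable fun i => ‖b i‖) :
    Tendsto (fun ε : ℝ => ∑' i, Real.exp (-(a i * ε)) • b i) (𝓝[>] 0) (𝓝 (∑' i, b i)) := by
  refine tendsto_tsum_of_dominated_convergence hb (fun i => ?_) ?_
  · have h : Continuous fun ε : ℝ => Real.exp (-(a i * ε)) • b i := by fun_prop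
    simpa using h.continuousWithinAt (s := Set.Ioi 0) (x := 0) |>.tendsto
  · filter_upwards [self_mem_nhdsWithin] with ε (hε : 0 < ε) i
    rw [norm_smul, Real.norm_of_nonneg (Real.exp_pos _).le]
    exact mul_le_of_le_one_left (norm_nonneg _)
      (Real.exp_le_one_iff.mpr (neg_nonpos.mpr (mul_nonneg (ha i) hε.le)))

lemma summable_norm_inv_sq_odd_mul {c : ℝ} (hc : 0 < c) :
    Summable fun n : ℕ => ‖(((2 * n + 1) * c) ^ 2)⁻¹‖ := by
  have h : Summable fun n : ℕ => (((n + 1 : ℕ) : ℝ) ^ 2)⁻¹ :=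
    (summable_nat_add_iff 1).mpr (Real.summable_nat_pow_inv.mpr one_lt_two)
  refine .of_nonneg_of_le (fun _ => norm_nonneg _) (fun n => ?_) (h.mul_left (c ^ 2)⁻¹)
  rw [Real.norm_of_nonneg (by positivity), ← mul_inv, ← mul_pow, mul_comm c]
  push_cast
  gcongr
  linarith [(n.cast_nonneg : (0 : ℝ) ≤ n)]

def oddCombination {m : ℕ} (c : Fin m → ℝ) (k : Fin m → ℕ) : ℝ :=
  ∑ j, (2 * (k j : ℝ) + 1) * c j

section OddCombination

variable {m : ℕ} {c : Fin m → ℝ}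

lemma oddCombination_nonneg (hc : ∀ j, 0 < c j) (k : Fin m → ℕ) : 0 ≤ oddCombination c k :=
  Finset.sum_nonneg fun j _ => by have := hc j; positivity

lemma exp_I_mul_oddCombination (k : Fin m → ℕ) (w : ℂ) :
    Complex.exp (Complex.I * oddCombination c k * w)
      = ∏ j, Complex.exp (Complex.I * (2 * k j + 1) * (c j * w)) := by
  rw [← Complex.exp_sum, oddCombination]
  push_cast
  rw [Finset.mul_sum, Finset.sum_mul]
  exact congrArg Complex.exp (Finset.sum_congr rfl fun j _ => by ring)

lemma summable_norm_exp_I_mul_oddCombination (hc : ∀ j, 0 < c j) {w : ℂ} (hw : 0 < w.im) :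
    Summable fun k => ‖Complex.exp (Complex.I * oddCombination c k * w)‖ := by
  simp only [exp_I_mul_oddCombination]
  exact (summable_norm_prod_pi fun j =>
    summable_norm_exp_I_mul_odd (by rw [Complex.im_ofReal_mul]; exact mul_pos (hc j) hw) :)

lemma hasSum_inv_prod_sin (hc : ∀ j, 0 < c j) {w : ℂ} (hw : 0 < w.im) :
    HasSum (fun k => (-2 * Complex.I) ^ m * Complex.exp (Complex.I * oddCombination c k * w))
      (∏ j, Complex.sin (c j * w))⁻¹ := by
  have hz : ∀ j, 0 < ((c j : ℂ) * w).im := fun j => by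
    rw [Complex.im_ofReal_mul]; exact mul_pos (hc j) hw
  have h := hasSum_prod_pi
    (f := fun j (n : ℕ) => -2 * Complex.I * Complex.exp (Complex.I * (2 * n + 1) * (c j * w)))
    fun j => ((summable_norm_exp_I_mul_odd (hz j)).mul_left ‖-2 * Complex.I‖).congr
      fun n => (norm_mul _ _).symm
  have hterm : (fun k : Fin m → ℕ =>
        ∏ j, -2 * Complex.I * Complex.exp (Complex.I * (2 * k j + 1) * (c j * w)))
      = fun k => (-2 * Complex.I) ^ m * Complex.exp (Complex.I * oddCombination c k * w) :=
    funext fun k => by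
      rw [Finset.prod_mul_distrib, Finset.prod_const, Finset.card_univ, Fintype.card_fin,
        exp_I_mul_oddCombination]
  have hsum : ∏ j, ∑' n : ℕ, -2 * Complex.I * Complex.exp (Complex.I * (2 * n + 1) * (c j * w))
      = (∏ j, Complex.sin (c j * w))⁻¹ := by
    rw [← Finset.prod_inv_distrib]
    exact Finset.prod_congr rfl fun j _ => (hasSum_inv_sin (hz j)).tsum_eq
  rwa [hterm, hsum] at h

lemma SchwartzMap.summable_norm_comp_oddCombination {E : Type*} [NormedAddCommGroup E]
    [NormedSpace ℝ E] (φ : SchwartzMap ℝ E) (hc : ∀ j, 0 < c j) :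
    Summable fun k => ‖φ (oddCombination c k)‖ := by
  obtain ⟨C, -, hC⟩ := φ.decay (2 * m) 0
  set P : (Fin m → ℕ) → ℝ := fun k => ∏ j, ((2 * k j + 1) * c j) ^ 2
  have hP : ∀ k, 0 < P k := fun k => Finset.prod_pos fun j _ => by have := hc j; positivity
  have hPle : ∀ k, P k ≤ ‖oddCombination c k‖ ^ (2 * m) := fun k => calc
    P k ≤ ∏ _j : Fin m, ‖oddCombination c k‖ ^ 2 := by
      refine Finset.prod_le_prod (fun j _ => by positivity) fun j _ => ?_
      refine pow_le_pow_left₀ (by have := hc j; positivity) ?_ 2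
      rw [Real.norm_of_nonneg (oddCombination_nonneg hc k)]
      exact Finset.single_le_sum (f := fun j => (2 * (k j : ℝ) + 1) * c j)
        (fun i _ => by have := hc i; positivity) (Finset.mem_univ j)
    _ = ‖oddCombination c k‖ ^ (2 * m) := by
      rw [Finset.prod_const, Finset.card_univ, Fintype.card_fin, ← pow_mul, mul_comm]
  have hbound : ∀ k, ‖φ (oddCombination c k)‖ ≤ C * (P k)⁻¹ := fun k => by
    rw [← div_eq_mul_inv, le_div_iff₀ (hP k), mul_comm]
    have := hC (oddCombination c k)
    rw [norm_iteratedFDeriv_zero] at this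
    exact (mul_le_mul_of_nonneg_right (hPle k) (norm_nonneg _)).trans this
  refine .of_nonneg_of_le (fun _ => norm_nonneg _) hbound ?_
  refine ((summable_norm_prod_pi fun j => summable_norm_inv_sq_odd_mul (hc j)).mul_left C).congr
    fun k => ?_
  rw [Real.norm_of_nonneg (Finset.prod_nonneg fun j _ => by positivity), Finset.prod_inv_distrib]

lemma integral_fourierT_div_prod_sin (hc : ∀ j, 0 < c j) (φ : SchwartzMap ℝ ℂ) {ε : ℝ}
    (hε : 0 < ε) :
    ∫ t : ℝ, fourierT φ t / ∏ j, Complex.sin (c j * (t + Complex.I * ε))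
      = 2 * π * ((-2 * Complex.I) ^ m *
        ∑' k, Real.exp (-(oddCombination c k * ε)) • φ (oddCombination c k)) := by
  set a := oddCombination c
  set C : (Fin m → ℕ) → ℂ := fun k => (-2 * Complex.I) ^ m * Real.exp (-(a k * ε))
  set F : (Fin m → ℕ) → ℝ → ℂ :=
    fun k t => C k * (fourierT φ t * Complex.exp (Complex.I * a k * t))
  have hexpand : ∀ t : ℝ,
      fourierT φ t / ∏ j, Complex.sin (c j * (t + Complex.I * ε)) = ∑' k, F k t := fun t => by
    have hw : 0 < ((t : ℂ) + Complex.I * ε).im := by simpa using hε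
    rw [div_eq_mul_inv, ← ((hasSum_inv_prod_sin hc hw).mul_left (fourierT φ t)).tsum_eq]
    refine tsum_congr fun k => ?_
    rw [exp_I_mul_ofReal_add_I_mul]
    ring
  have hC : Summable fun k => ‖C k‖ := by
    have h := (summable_norm_exp_I_mul_oddCombination hc (w := Complex.I * ε)
      (by simpa using hε)).mul_left (2 ^ m)
    refine h.congr fun k => ?_
    simp [C, a, Complex.norm_exp]
  have hnorm : ∀ k, ∫ t, ‖F k t‖ = ‖C k‖ * ∫ t, ‖fourierT φ t‖ := fun k => by
    simp [F, norm_exp_I_mul, integral_const_mul]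
  have hsum : Summable fun k => ∫ t, ‖F k t‖ := by
    simpa only [hnorm] using hC.mul_right _
  rw [integral_congr_ae (ae_of_all _ hexpand), ← integral_tsum_of_summable_integral_norm
    (fun k => (integrable_fourierT_mul_exp φ (a k)).const_mul (C k)) hsum]
  simp only [integral_const_mul, integral_fourierT_mul_exp, C, Complex.real_smul]
  rw [← tsum_mul_left, ← tsum_mul_left]
  exact tsum_congr fun k => by ring

end OddCombination

/-- for positive reals `c_1,…,c_m`,
`(1/2π)⟨1/∏_j sin(c_j(t+i0)), φ̂⟩ = (-2i)^m Σ_{k∈ℤ_+^m} φ(Σ_j (2k_j+1)c_j)`,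
where the pairing is the limit as `ε → 0⁺` of the regularized integral. -/
theorem stmt1 (m : ℕ) (c : Fin m → ℝ) (hc : ∀ j, 0 < c j) (φ : SchwartzMap ℝ ℂ) :
    Tendsto
      (fun ε : ℝ =>
        (1 / (2 * (π : ℂ))) *
          ∫ t : ℝ, fourierT φ t /
            ∏ j : Fin m, Complex.sin ((c j : ℂ) * ((t : ℂ) + Complex.I * ε)))
      (𝓝[>] (0 : ℝ))
      (𝓝 ((-2 * Complex.I) ^ m *
        ∑' k : Fin m → ℕ, φ (∑ j : Fin m, (2 * (k j : ℝ) + 1) * c j))) := by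
  have hlim := (tendsto_tsum_exp_neg_mul_smul (oddCombination_nonneg hc)
    (φ.summable_norm_comp_oddCombination hc)).const_mul ((-2 * Complex.I) ^ m)
  refine hlim.congr' ?_
  filter_upwards [self_mem_nhdsWithin] with ε (hε : 0 < ε)
  have hπ : (2 * π : ℂ) ≠ 0 := by exact_mod_cast two_pi_pos.ne'
  rw [integral_fourierT_div_prod_sin hc φ hε, ← mul_assoc, one_div_mul_cancel hπ, one_mul]
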